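/- Let G be a graph and let u, v be distinct vertices that are connected in G. Then u and v lie in a common block (maximal biconnected subgraph) of G if and only if for every vertex w ∉ {u, v}, the vertices u and v are connected in G − {w} (the graph with the vertex w and all edges incident to it deleted). -/

import Mathlib

open SimpleGraph

/-- The graph `G` with the edge `{a,b}` inserted. -/
def addEdge {W : Type*} (G : SimpleGraph W) (a b : W) : SimpleGraph W :=
  G ⊔ SimpleGraph.fromEdgeSet {s(a, b)}

/-- `u` and `v` are joined by a walk all of whose vertices lie in `A`,
i.e. they are connected in the subgraph induced on `A`. -/
def ReachableWithin {W : Type*} (G : SimpleGraph W) (A : Set W) (u v : W) : Prop :=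
  ∃ p : G.Walk u v, ∀ x ∈ p.support, x ∈ A

/-- The subgraph of `G` induced on the vertex set `A` is connected. -/
def ConnectedOn {W : Type*} (G : SimpleGraph W) (A : Set W) : Prop :=
  A.Nonempty ∧ ∀ ⦃u⦄, u ∈ A → ∀ ⦃v⦄, v ∈ A → ReachableWithin G A u v

/-- The subgraph of `G` induced on `A` is biconnected: connected and without cut vertices. -/
def BiconnectedOn {W : Type*} (G : SimpleGraph W) (A : Set W) : Prop :=
  ConnectedOn G A ∧ ∀ w ∈ A, (A \ {w}).Nonempty → ConnectedOn G (A \ {w})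

/-- `B` is (the vertex set of) a block of `G`: a maximal biconnected subgraph. -/
def IsBlock {W : Type*} (G : SimpleGraph W) (B : Set W) : Prop :=
  BiconnectedOn G B ∧ ∀ B' : Set W, B ⊆ B' → BiconnectedOn G B' → B' = B

/-- The subgraph of `G` induced on `A` is `k`-connected: it has more than `k` vertices
and remains connected after deleting any fewer than `k` vertices. -/
def KConnectedOn {W : Type*} (k : ℕ) (G : SimpleGraph W) (A : Set W) : Prop :=
  (∃ f : Fin (k + 1) → W, Function.Injective f ∧ ∀ i, f i ∈ A) ∧
  ∀ S : Set W, S.Finite → S.ncard < k → ConnectedOn G (A \ S)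

/-- `G` is `k`-connected. -/
def KConnected {W : Type*} (k : ℕ) (G : SimpleGraph W) : Prop :=
  KConnectedOn k G Set.univ

/-- Two walks with common endpoints are internally vertex-disjoint: they share no
vertices other than the endpoints. -/
def IntDisjoint {W : Type*} (G : SimpleGraph W) {s t : W} (p q : G.Walk s t) : Prop :=
  ∀ x, x ∈ p.support → x ∈ q.support → x = s ∨ x = t

/-- The subgraph of `G` induced on the vertex set `A` (with edges only inside `A`),
as a graph on the ambient vertex type. -/
def inducedOn {W : Type*} (G : SimpleGraph W) (A : Set W) : SimpleGraph W :=
  SimpleGraph.fromRel (fun u v => u ∈ A ∧ v ∈ A ∧ G.Adj u v)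

/-
Let `S` be the set of vertices lying on some `u`–`v` path. For any vertex `w`, every `x ∈ S \ {w}`
can walk along its path, in one of the two directions, to `u` or to `v` without meeting `w`; and
when `w ∉ {u, v}` the hypothesis supplies a `u`–`v` path avoiding `w`, whose vertices again lie in
`S`. Hence `S` is biconnected, and on a finite vertex set it extends to a block.
-/

section

variable {V : Type*} {G : SimpleGraph V} {A B : Set V} {a b u v w x : V}

namespace ReachableWithin

theorem symm (h : ReachableWithin G A a b) : ReachableWithin G A b a := by
  obtain ⟨p, hp⟩ := h
  exact ⟨p.reverse, fun y hy => hp y (by simpa using hy)⟩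

theorem trans (hab : ReachableWithin G A a b) (hbx : ReachableWithin G A b x) :
    ReachableWithin G A a x := by
  obtain ⟨p, hp⟩ := hab
  obtain ⟨q, hq⟩ := hbx
  refine ⟨p.append q, fun y hy => ?_⟩
  rcases (Walk.mem_support_append_iff p q).1 hy with hy | hy
  exacts [hp y hy, hq y hy]

theorem mono (hAB : A ⊆ B) (h : ReachableWithin G A a b) : ReachableWithin G B a b := by
  obtain ⟨p, hp⟩ := h
  exact ⟨p, fun y hy => hAB (hp y hy)⟩

theorem right_mem (h : ReachableWithin G A a b) : b ∈ A := by
  obtain ⟨p, hp⟩ := h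
  exact hp b p.end_mem_support

end ReachableWithin

theorem connectedOn_of_forall_reachableWithin_or (hA : A.Nonempty)
    (hab : a ∈ A → b ∈ A → ReachableWithin G A a b)
    (h : ∀ x ∈ A, ReachableWithin G A x a ∨ ReachableWithin G A x b) : ConnectedOn G A := by
  refine ⟨hA, fun x hx y hy => ?_⟩
  rcases h x hx with hxa | hxb <;> rcases h y hy with hya | hyb
  · exact hxa.trans hya.symm
  · exact hxa.trans ((hab hxa.right_mem hyb.right_mem).trans hyb.symm)
  · exact hxb.trans ((hab hya.right_mem hxb.right_mem).symm.trans hya.symm)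
  · exact hxb.trans hyb.symm

theorem BiconnectedOn.reachableWithin_compl_singleton (hA : BiconnectedOn G A) (ha : a ∈ A)
    (hb : b ∈ A) (hwa : w ≠ a) (hwb : w ≠ b) : ReachableWithin G {w}ᶜ a b := by
  by_cases hw : w ∈ A
  · have haw : a ∈ A \ {w} := ⟨ha, hwa.symm⟩
    exact ((hA.2 w hw ⟨a, haw⟩).2 haw ⟨hb, hwb.symm⟩).mono fun y hy => hy.2
  · exact (hA.1.2 ha hb).mono fun y hy hyw => hw (hyw ▸ hy)

theorem BiconnectedOn.exists_isBlock_superset [Finite V] (hA : BiconnectedOn G A) :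
    ∃ B, IsBlock G B ∧ A ⊆ B := by
  obtain ⟨B, ⟨hB, hAB⟩, hmax⟩ := Set.Finite.exists_maximalFor id
    {B : Set V | BiconnectedOn G B ∧ A ⊆ B} (Set.toFinite _) ⟨A, hA, subset_rfl⟩
  exact ⟨B, ⟨hB, fun B' hBB' hB' => (hmax ⟨hB', hAB.trans hBB'⟩ hBB').antisymm hBB'⟩, hAB⟩

namespace SimpleGraph.Walk

theorem IsPath.eq_of_mem_support_takeUntil_of_mem_support_dropUntil [DecidableEq V]
    {p : G.Walk a b} (hp : p.IsPath) (hx : x ∈ p.support) {y : V}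
    (h₁ : y ∈ (p.takeUntil x hx).support) (h₂ : y ∈ (p.dropUntil x hx).support) : y = x := by
  by_contra hyx
  have hnodup := hp.support_nodup
  rw [← p.take_spec hx, support_append] at hnodup
  rw [← cons_tail_support] at h₂
  exact List.disjoint_of_nodup_append hnodup h₁ ((List.mem_cons.1 h₂).resolve_left hyx)

theorem reachableWithin_support_start (p : G.Walk a b) (hx : x ∈ p.support) :
    ReachableWithin G {y | y ∈ p.support} x a := by
  classical
  refine ⟨(p.takeUntil x hx).reverse, fun y hy => ?_⟩
  rw [support_reverse, List.mem_reverse] at hy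
  exact p.support_takeUntil_subset_support hx hy

/-- Splitting a path at `x`, the vertex `w ≠ x` lies on at most one of the two pieces. -/
theorem IsPath.reachableWithin_start_or_end {p : G.Walk a b} (hp : p.IsPath)
    (hx : x ∈ p.support) (hxw : x ≠ w) :
    ReachableWithin G ({y | y ∈ p.support} \ {w}) x a ∨
      ReachableWithin G ({y | y ∈ p.support} \ {w}) x b := by
  classical
  by_cases hw : w ∈ (p.takeUntil x hx).support
  · refine .inr ⟨p.dropUntil x hx, fun y hy => ⟨p.support_dropUntil_subset_support hx hy, ?_⟩⟩
    rintro rfl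
    exact hxw (hp.eq_of_mem_support_takeUntil_of_mem_support_dropUntil hx hw hy).symm
  · refine .inl ⟨(p.takeUntil x hx).reverse, fun y hy => ?_⟩
    rw [support_reverse, List.mem_reverse] at hy
    exact ⟨p.support_takeUntil_subset_support hx hy, by rintro rfl; exact hw hy⟩

end SimpleGraph.Walk

def pathVertices (G : SimpleGraph V) (u v : V) : Set V :=
  {x | ∃ p : G.Walk u v, p.IsPath ∧ x ∈ p.support}

theorem support_subset_pathVertices {p : G.Walk u v} (hp : p.IsPath) :
    {x | x ∈ p.support} ⊆ pathVertices G u v :=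
  fun _ hx => ⟨p, hp, hx⟩

theorem ReachableWithin.inter_pathVertices (h : ReachableWithin G A u v) :
    ReachableWithin G (pathVertices G u v ∩ A) u v := by
  classical
  obtain ⟨p, hp⟩ := h
  exact ⟨p.bypass, fun x hx =>
    ⟨⟨p.bypass, p.bypass_isPath, hx⟩, hp x (p.support_bypass_subset_support hx)⟩⟩

theorem SimpleGraph.Reachable.left_mem_pathVertices (h : G.Reachable u v) :
    u ∈ pathVertices G u v := by
  classical
  obtain ⟨p⟩ := h
  exact ⟨p.bypass, p.bypass_isPath, p.bypass.start_mem_support⟩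

theorem SimpleGraph.Reachable.right_mem_pathVertices (h : G.Reachable u v) :
    v ∈ pathVertices G u v := by
  classical
  obtain ⟨p⟩ := h
  exact ⟨p.bypass, p.bypass_isPath, p.bypass.end_mem_support⟩

theorem biconnectedOn_pathVertices (hr : G.Reachable u v)
    (H : ∀ w, w ≠ u → w ≠ v → ReachableWithin G {w}ᶜ u v) :
    BiconnectedOn G (pathVertices G u v) := by
  constructor
  · refine connectedOn_of_forall_reachableWithin_or (a := u) (b := v)
      ⟨u, hr.left_mem_pathVertices⟩ (fun _ _ => ?_) ?_
    · obtain ⟨p⟩ := hr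
      exact (ReachableWithin.inter_pathVertices (A := Set.univ) ⟨p, fun _ _ => trivial⟩).mono
        Set.inter_subset_left
    · rintro x ⟨p, hp, hx⟩
      exact .inl ((p.reachableWithin_support_start hx).mono (support_subset_pathVertices hp))
  · intro w _ hne
    refine connectedOn_of_forall_reachableWithin_or (a := u) (b := v) hne
      (fun hu hv => ?_) ?_
    · exact (H w (Ne.symm hu.2) (Ne.symm hv.2)).inter_pathVertices.mono
        fun y hy => ⟨hy.1, hy.2⟩
    · rintro x ⟨⟨p, hp, hx⟩, hxw⟩
      exact (hp.reachableWithin_start_or_end hx hxw).imp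
        (·.mono (Set.sdiff_subset_sdiff_left (support_subset_pathVertices hp)))
        (·.mono (Set.sdiff_subset_sdiff_left (support_subset_pathVertices hp)))

end

theorem stmt14_general {V : Type*} [Fintype V] (G : SimpleGraph V) (u v : V)
    (hr : G.Reachable u v) :
    (∃ B : Set V, IsBlock G B ∧ u ∈ B ∧ v ∈ B) ↔
    ∀ w : V, w ≠ u → w ≠ v → ReachableWithin G {w}ᶜ u v := by
  constructor
  · rintro ⟨B, hB, hu, hv⟩ w hwu hwv
    exact hB.1.reachableWithin_compl_singleton hu hv hwu hwv
  · intro H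
    obtain ⟨B, hB, hsub⟩ := (biconnectedOn_pathVertices hr H).exists_isBlock_superset
    exact ⟨B, hB, hsub hr.left_mem_pathVertices, hsub hr.right_mem_pathVertices⟩

/-- Connected distinct vertices `u, v` lie in a common block of `G`
iff for every vertex `w ∉ {u,v}` they remain connected in `G − {w}`. -/
theorem stmt14 {V : Type*} [Fintype V] (G : SimpleGraph V) (u v : V) (huv : u ≠ v)
    (hr : G.Reachable u v) :
    (∃ B : Set V, IsBlock G B ∧ u ∈ B ∧ v ∈ B) ↔
    ∀ w : V, w ≠ u → w ≠ v → ReachableWithin G {w}ᶜ u v :=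
  stmt14_general G u v hr
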